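/- Let G_j : ℝ^N → ℝ^{N_j} be solution operators, P̃_j prolongations, and R̄, P̄ substructure restriction/prolongation with R̄ P̄ = I. Assume R̄ Σ_j P̃_j G_j(u) = R̄ Σ_j P̃_j G_j(P̄ R̄ u) for all u. Define Ḡ_j(v) := R̄ P̃_j G_j(P̄ v). If u^0 ∈ ℝ^N, v^0 = R̄ u^0, u^n = Σ_j P̃_j G_j(u^{n-1}), and v^n = Σ_j Ḡ_j(v^{n-1}), then R̄ u^n = v^n for all n ≥ 1. -/

import Mathlib

/-!
The restriction `R̄` semiconjugates the RAS step `u ↦ ∑ⱼ P̃ⱼ Gⱼ(u)` to the SRAS step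
`v ↦ ∑ⱼ R̄ P̃ⱼ Gⱼ(P̄ v)`: by compatibility `R̄ ∑ⱼ P̃ⱼ Gⱼ(u) = R̄ ∑ⱼ P̃ⱼ Gⱼ(P̄ R̄ u)`, and `R̄` is
additive. Orbits of semiconjugate maps started at related points stay related.
-/

open Matrix

theorem Function.Semiconj.apply_orbit {α β : Type*} {f : α → β} {ga : α → α} {gb : β → β}
    (h : Function.Semiconj f ga gb) {u : ℕ → α} {v : ℕ → β} (h0 : v 0 = f (u 0))
    (hu : ∀ n, u (n + 1) = ga (u n)) (hv : ∀ n, v (n + 1) = gb (v n)) (n : ℕ) :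
    f (u n) = v n := by
  induction n with
  | zero => exact h0.symm
  | succ n ih => rw [hu, hv, h, ih]

section SchwarzIteration

variable {𝕜 ι n nb : Type*} [NonUnitalNonAssocSemiring 𝕜] [Fintype ι] [Fintype n]
  {d : ι → Type*} [∀ j, Fintype (d j)]

def rasStep (G : ∀ j, (n → 𝕜) → (d j → 𝕜)) (Pt : ∀ j, Matrix n (d j) 𝕜) (u : n → 𝕜) : n → 𝕜 :=
  ∑ j, Pt j *ᵥ G j u

def srasStep [Fintype nb] (G : ∀ j, (n → 𝕜) → (d j → 𝕜)) (Pt : ∀ j, Matrix n (d j) 𝕜)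
    (Rb : Matrix nb n 𝕜) (Pb : Matrix n nb 𝕜) (v : nb → 𝕜) : nb → 𝕜 :=
  ∑ j, Rb *ᵥ (Pt j *ᵥ G j (Pb *ᵥ v))

theorem semiconj_rasStep_srasStep [Fintype nb] {G : ∀ j, (n → 𝕜) → (d j → 𝕜)}
    {Pt : ∀ j, Matrix n (d j) 𝕜} {Rb : Matrix nb n 𝕜} {Pb : Matrix n nb 𝕜}
    (hcompat : ∀ u, Rb *ᵥ rasStep G Pt u = Rb *ᵥ rasStep G Pt (Pb *ᵥ (Rb *ᵥ u))) :
    Function.Semiconj (Rb *ᵥ ·) (rasStep G Pt) (srasStep G Pt Rb Pb) := fun u => by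
  dsimp only
  rw [hcompat, rasStep, mulVec_sum, srasStep]

end SchwarzIteration

theorem nonlinear_ras_sras_equivalence_general {N Nb m : ℕ} {d : Fin m → ℕ}
    (G : ∀ j : Fin m, (Fin N → ℝ) → (Fin (d j) → ℝ))
    (Pt : ∀ j : Fin m, Matrix (Fin N) (Fin (d j)) ℝ)
    (Rb : Matrix (Fin Nb) (Fin N) ℝ) (Pb : Matrix (Fin N) (Fin Nb) ℝ)
    (hcompat : ∀ u, Rb.mulVec (∑ j, (Pt j).mulVec (G j u))
      = Rb.mulVec (∑ j, (Pt j).mulVec (G j (Pb.mulVec (Rb.mulVec u)))))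
    (u : ℕ → Fin N → ℝ) (v : ℕ → Fin Nb → ℝ)
    (hv0 : v 0 = Rb.mulVec (u 0))
    (hu : ∀ n, u (n + 1) = ∑ j, (Pt j).mulVec (G j (u n)))
    (hv : ∀ n, v (n + 1) = ∑ j, Rb.mulVec ((Pt j).mulVec (G j (Pb.mulVec (v n))))) :
    ∀ n : ℕ, 1 ≤ n → Rb.mulVec (u n) = v n :=
  fun n _ => (semiconj_rasStep_srasStep (Pb := Pb) hcompat).apply_orbit hv0 hu hv n

/-- Equivalence between nonlinear RAS and nonlinear SRAS iterates. -/
theorem nonlinear_ras_sras_equivalence {N Nb m : ℕ} {d : Fin m → ℕ}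
    (G : ∀ j : Fin m, (Fin N → ℝ) → (Fin (d j) → ℝ))
    (Pt : ∀ j : Fin m, Matrix (Fin N) (Fin (d j)) ℝ)
    (Rb : Matrix (Fin Nb) (Fin N) ℝ) (Pb : Matrix (Fin N) (Fin Nb) ℝ)
    (hRP : Rb * Pb = 1)
    (hcompat : ∀ u, Rb.mulVec (∑ j, (Pt j).mulVec (G j u))
      = Rb.mulVec (∑ j, (Pt j).mulVec (G j (Pb.mulVec (Rb.mulVec u)))))
    (u : ℕ → Fin N → ℝ) (v : ℕ → Fin Nb → ℝ)
    (hv0 : v 0 = Rb.mulVec (u 0))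
    (hu : ∀ n, u (n + 1) = ∑ j, (Pt j).mulVec (G j (u n)))
    (hv : ∀ n, v (n + 1) = ∑ j, Rb.mulVec ((Pt j).mulVec (G j (Pb.mulVec (v n))))) :
    ∀ n : ℕ, 1 ≤ n → Rb.mulVec (u n) = v n :=
  nonlinear_ras_sras_equivalence_general G Pt Rb Pb hcompat u v hv0 hu hv
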